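/- Let p be a non-zero polynomial on ℂⁿ, A > 0, and let (f_m) be a sequence of entire functions such that (p·f_m) is a Cauchy sequence with respect to the norm ‖g‖_A = sup_z |g(z)|e^{-A|z|}. Then (f_m) is a Cauchy sequence with respect to the norm ‖·‖_{√n A}. -/

import Mathlib

/-!
Choose a direction `w` on which the top homogeneous component `p_d` of `p` does not vanish.
On each complex line `t ↦ z + t w`, `p` is a polynomial in `t` of degree `d` with leading
coefficient `p_d(w)`, independent of `z`. Its `d` roots cannot come close to all of `d + 1`
well-separated circles `|t| = r`, `1 ≤ r ≤ 2`, so on one of them `|p(z + t w)| ≥ K` with `K > 0`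
independent of `z`. The maximum principle on that circle gives
`|g(z)| ≤ K⁻¹ e^{2A|w|} ‖p g‖_A e^{A|z|}` for every entire `g`; apply it to `g = f_m - f_k` and use `‖·‖_{√n A} ≤ ‖·‖_A`.
-/

/-- The Euclidean norm on ℂⁿ. -/
noncomputable def enorm' {n : ℕ} (z : Fin n → ℂ) : ℝ :=
  Real.sqrt (∑ i, ‖z i‖ ^ 2)

open Polynomial

section EuclideanNorm

variable {n : ℕ}

lemma enorm'_eq_norm_toLp (z : Fin n → ℂ) :
    enorm' z = ‖(WithLp.toLp 2 z : EuclideanSpace ℂ (Fin n))‖ := by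
  simp [enorm', EuclideanSpace.norm_eq]

lemma enorm'_nonneg (z : Fin n → ℂ) : 0 ≤ enorm' z := Real.sqrt_nonneg _

lemma enorm'_add_le (z w : Fin n → ℂ) : enorm' (z + w) ≤ enorm' z + enorm' w := by
  simpa only [enorm'_eq_norm_toLp, WithLp.toLp_add] using norm_add_le _ _

lemma enorm'_smul (t : ℂ) (z : Fin n → ℂ) : enorm' (t • z) = ‖t‖ * enorm' z := by
  simp only [enorm'_eq_norm_toLp, WithLp.toLp_smul, norm_smul]

lemma enorm'_add_smul_le (z w : Fin n → ℂ) (t : ℂ) :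
    enorm' (z + t • w) ≤ enorm' z + ‖t‖ * enorm' w := by
  simpa only [enorm'_smul] using enorm'_add_le z (t • w)

lemma enorm'_le_sqrt_mul (z : Fin n → ℂ) : enorm' z ≤ √n * enorm' z := by
  rcases n.eq_zero_or_pos with rfl | hn
  · simp [enorm']
  · exact le_mul_of_one_le_left (enorm'_nonneg z) (Real.one_le_sqrt.mpr (by exact_mod_cast hn))

end EuclideanNorm

namespace Polynomial

variable {ι R : Type*} [CommSemiring R]

lemma natDegree_pow_le_self_of_natDegree_le_one {f : R[X]} (hf : f.natDegree ≤ 1) (k : ℕ) :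
    (f ^ k).natDegree ≤ k := by
  simpa using natDegree_pow_le_of_le k hf

lemma coeff_pow_self_of_natDegree_le_one {f : R[X]} (hf : f.natDegree ≤ 1) (k : ℕ) :
    (f ^ k).coeff k = f.coeff 1 ^ k := by
  simpa using coeff_pow_of_natDegree_le (m := k) hf

lemma coeff_prod_sum_of_natDegree_le (s : Finset ι) (f : ι → R[X]) (d : ι → ℕ)
    (h : ∀ i ∈ s, (f i).natDegree ≤ d i) :
    (∏ i ∈ s, f i).coeff (∑ i ∈ s, d i) = ∏ i ∈ s, (f i).coeff (d i) := by
  induction s using Finset.cons_induction with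
  | empty => simp
  | cons a s ha ih =>
    rw [Finset.forall_mem_cons] at h
    rw [Finset.prod_cons, Finset.sum_cons, Finset.prod_cons,
      coeff_mul_add_eq_of_natDegree_le h.1 ((natDegree_prod_le _ _).trans (Finset.sum_le_sum h.2)),
      ih h.2]

end Polynomial

namespace MvPolynomial

variable {σ R : Type*} [CommSemiring R]

section

variable {g : σ → R[X]}

lemma degree_le_totalDegree {p : MvPolynomial σ R} {a : σ →₀ ℕ} (ha : a ∈ p.support) :
    a.degree ≤ p.totalDegree :=
  le_totalDegree ha

lemma exists_mem_support_degree_eq_totalDegree {p : MvPolynomial σ R} (hp : p ≠ 0) :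
    ∃ a ∈ p.support, a.degree = p.totalDegree := by
  obtain ⟨a, ha, h⟩ := Finset.exists_mem_eq_sup p.support (support_nonempty.mpr hp)
    fun a : σ →₀ ℕ => a.sum fun _ e => e
  exact ⟨a, ha, h.symm⟩

lemma natDegree_aeval_monomial_le (hg : ∀ i, (g i).natDegree ≤ 1) (a : σ →₀ ℕ) (c : R) :
    (aeval g (monomial a c)).natDegree ≤ a.degree := by
  rw [aeval_monomial, Finsupp.prod, Finsupp.degree_apply]
  exact natDegree_C_mul_le _ _ |>.trans <| (natDegree_prod_le _ _).trans <|
    Finset.sum_le_sum fun i _ => natDegree_pow_le_self_of_natDegree_le_one (hg i) (a i)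

lemma coeff_aeval_monomial_degree (hg : ∀ i, (g i).natDegree ≤ 1) (a : σ →₀ ℕ) (c : R) :
    (aeval g (monomial a c)).coeff a.degree = eval (fun i => (g i).coeff 1) (monomial a c) := by
  rw [aeval_monomial, eval_monomial, Finsupp.prod, Finsupp.prod, Finsupp.degree_apply,
    Polynomial.algebraMap_eq, Polynomial.coeff_C_mul, coeff_prod_sum_of_natDegree_le _ _ _
      fun i _ => natDegree_pow_le_self_of_natDegree_le_one (hg i) (a i)]
  simp only [coeff_pow_self_of_natDegree_le_one (hg _)]

lemma natDegree_aeval_le_totalDegree (hg : ∀ i, (g i).natDegree ≤ 1) (p : MvPolynomial σ R) :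
    (aeval g p).natDegree ≤ p.totalDegree := by
  conv_lhs => enter [1, 2]; rw [p.as_sum]
  rw [map_sum]
  exact natDegree_sum_le_of_forall_le _ _ fun a ha =>
    (natDegree_aeval_monomial_le hg a _).trans (degree_le_totalDegree ha)

lemma coeff_aeval_totalDegree (hg : ∀ i, (g i).natDegree ≤ 1) (p : MvPolynomial σ R) :
    (aeval g p).coeff p.totalDegree =
      eval (fun i => (g i).coeff 1) (homogeneousComponent p.totalDegree p) := by
  conv_lhs => enter [1, 2]; rw [p.as_sum]
  rw [map_sum, finsetSum_coeff, homogeneousComponent_apply, map_sum, Finset.sum_filter]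
  refine Finset.sum_congr rfl fun a ha => ?_
  split_ifs with hd
  · rw [← hd, coeff_aeval_monomial_degree hg]
  · exact coeff_eq_zero_of_natDegree_lt <| (natDegree_aeval_monomial_le hg a _).trans_lt <|
      (degree_le_totalDegree ha).lt_of_ne hd

lemma homogeneousComponent_totalDegree_ne_zero {p : MvPolynomial σ R} (hp : p ≠ 0) :
    homogeneousComponent p.totalDegree p ≠ 0 := by
  obtain ⟨a, ha, hda⟩ := exists_mem_support_degree_eq_totalDegree hp
  intro h0
  have := coeff_homogeneousComponent (n := p.totalDegree) (φ := p) a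
  rw [h0, if_pos hda, coeff_zero] at this
  exact mem_support_iff.mp ha this.symm

end

noncomputable def restrictLine (z w : σ → R) (p : MvPolynomial σ R) : R[X] :=
  aeval (fun i => Polynomial.C (w i) * Polynomial.X + Polynomial.C (z i)) p

variable (z w : σ → R) (p : MvPolynomial σ R)

lemma eval_restrictLine (t : R) : (restrictLine z w p).eval t = eval (z + t • w) p := by
  rw [restrictLine, ← Polynomial.coe_aeval_eq_eval, ← AlgHom.comp_apply, comp_aeval]
  have : (fun i => Polynomial.aeval t (Polynomial.C (w i) * Polynomial.X + Polynomial.C (z i))) =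
      z + t • w := by
    funext i
    simp only [map_add, map_mul, Polynomial.aeval_C, Polynomial.aeval_X, Pi.add_apply, Pi.smul_apply,
      smul_eq_mul, Algebra.algebraMap_self, RingHom.id_apply]
    ring
  rw [this]
  rfl

lemma natDegree_restrictLine_le : (restrictLine z w p).natDegree ≤ p.totalDegree :=
  natDegree_aeval_le_totalDegree (fun _ => natDegree_linear_le) p

lemma coeff_restrictLine_totalDegree :
    (restrictLine z w p).coeff p.totalDegree =
      eval w (homogeneousComponent p.totalDegree p) := by
  rw [restrictLine, coeff_aeval_totalDegree fun _ => natDegree_linear_le]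
  simp

variable {z w p}

lemma natDegree_restrictLine (hw : eval w (homogeneousComponent p.totalDegree p) ≠ 0) :
    (restrictLine z w p).natDegree = p.totalDegree :=
  (natDegree_restrictLine_le z w p).antisymm <|
    le_natDegree_of_ne_zero <| by rwa [coeff_restrictLine_totalDegree]

lemma leadingCoeff_restrictLine (hw : eval w (homogeneousComponent p.totalDegree p) ≠ 0) :
    (restrictLine z w p).leadingCoeff = eval w (homogeneousComponent p.totalDegree p) := by
  rw [leadingCoeff, natDegree_restrictLine hw, coeff_restrictLine_totalDegree]

end MvPolynomial

lemma exists_mem_Icc_forall_le_abs_sub (S : Multiset ℝ) :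
    ∃ r ∈ Set.Icc (1 : ℝ) 2, ∀ x ∈ S, (2 * (Multiset.card S + 1) : ℝ)⁻¹ ≤ |r - x| := by
  set d := Multiset.card S
  set δ : ℝ := (2 * (d + 1))⁻¹
  have hδ : 0 < δ := by positivity
  have hdδ : 2 * (d + 1) * δ = 1 := mul_inv_cancel₀ (by positivity)
  set c : ℕ → ℝ := fun k => 1 + (2 * k + 1) * δ
  -- The `d + 1` points `c k` are `2δ` apart, so the `d` points of `S` cannot be `δ`-close to all.
  by_contra! h
  have hclose : ∀ k ∈ Finset.range (d + 1), ∃ x ∈ S, |c k - x| < δ := fun k hk => by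
    have hk : (k : ℝ) ≤ d := by exact_mod_cast Nat.lt_succ_iff.mp (Finset.mem_range.mp hk)
    exact h (c k) ⟨by simp only [c]; nlinarith, by simp only [c]; nlinarith⟩
  choose! x hxS hx using hclose
  obtain ⟨k, hk, j, hj, hkj, hxkj⟩ := Finset.exists_ne_map_eq_of_card_lt_of_maps_to
    (t := S.toFinset) (by simpa using (Multiset.toFinset_card_le S).trans_lt d.lt_succ_self)
    fun k hk => Multiset.mem_toFinset.mpr (hxS k hk)
  have hsep : ∀ k j : ℕ, k < j → 2 * δ ≤ c j - c k := fun k j hlt => by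
    have : (k : ℝ) + 1 ≤ j := by exact_mod_cast hlt
    simp only [c]; nlinarith
  have hk' := abs_lt.mp (hx k hk)
  have hj' := abs_lt.mp (hx j hj)
  rw [hxkj] at hk'
  rcases Nat.lt_or_gt_of_ne hkj with hlt | hlt
  · linarith [hsep k j hlt]
  · linarith [hsep j k hlt]

lemma Polynomial.exists_mem_Icc_forall_le_norm_eval (q : ℂ[X]) :
    ∃ r ∈ Set.Icc (1 : ℝ) 2, ∀ t : ℂ, ‖t‖ = r →
      ‖q.leadingCoeff‖ * (2 * (q.natDegree + 1) : ℝ)⁻¹ ^ q.natDegree ≤ ‖q.eval t‖ := by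
  have hsplit := IsAlgClosed.splits q
  obtain ⟨r, hr, hS⟩ := exists_mem_Icc_forall_le_abs_sub (q.roots.map (‖·‖))
  rw [Multiset.card_map, ← hsplit.natDegree_eq_card_roots] at hS
  refine ⟨r, hr, fun t ht => ?_⟩
  rw [hsplit.eval_eq_prod_roots, norm_mul, hsplit.natDegree_eq_card_roots,
    ← Multiset.prod_replicate, ← Multiset.map_const', ← hsplit.natDegree_eq_card_roots,
    show ∀ s : Multiset ℂ, ‖s.prod‖ = (s.map (‖·‖)).prod from map_multiset_prod normHom,
    Multiset.map_map]
  gcongr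
  refine Multiset.prod_map_le_prod_map₀ _ _ (fun _ _ => by positivity) fun a ha => ?_
  calc (2 * (q.natDegree + 1) : ℝ)⁻¹ ≤ |r - ‖a‖| := hS _ (Multiset.mem_map_of_mem _ ha)
    _ ≤ ‖t - a‖ := ht ▸ abs_norm_sub_norm_le t a

lemma Differentiable.norm_le_of_forall_norm_sub_eq_le {F : Type*} [NormedAddCommGroup F]
    [NormedSpace ℂ F] {u : ℂ → F} (hu : Differentiable ℂ u) {c : ℂ} {r B : ℝ} (hr : 0 < r)
    (h : ∀ t, ‖t - c‖ = r → ‖u t‖ ≤ B) : ‖u c‖ ≤ B :=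
  Complex.norm_le_of_forall_mem_frontier_norm_le Metric.isBounded_ball hu.diffContOnCl
    (fun t ht => h t <| by rwa [frontier_ball c hr.ne', mem_sphere_iff_norm] at ht)
    (subset_closure (Metric.mem_ball_self hr))

theorem MvPolynomial.exists_forall_exists_radius_le_norm_eval_add_smul {σ : Type*}
    {p : MvPolynomial σ ℂ} (hp : p ≠ 0) :
    ∃ w : σ → ℂ, ∃ K > 0, ∀ z : σ → ℂ,
      ∃ r ∈ Set.Icc (1 : ℝ) 2, ∀ t : ℂ, ‖t‖ = r → K ≤ ‖eval (z + t • w) p‖ := by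
  obtain ⟨w, hw⟩ : ∃ w, eval w (homogeneousComponent p.totalDegree p) ≠ 0 := by
    simpa using funext_iff.not.mp (homogeneousComponent_totalDegree_ne_zero hp)
  have hw' := norm_pos_iff.mpr hw
  refine ⟨w, ‖eval w (homogeneousComponent p.totalDegree p)‖ *
    (2 * (p.totalDegree + 1) : ℝ)⁻¹ ^ p.totalDegree, by positivity, fun z => ?_⟩
  obtain ⟨r, hr, hle⟩ := (restrictLine z w p).exists_mem_Icc_forall_le_norm_eval
  rw [leadingCoeff_restrictLine hw, natDegree_restrictLine hw] at hle
  exact ⟨r, hr, fun t ht => (hle t ht).trans_eq (by rw [eval_restrictLine])⟩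

open MvPolynomial in
theorem exists_forall_norm_le_of_norm_eval_mul_le {n : ℕ} {p : MvPolynomial (Fin n) ℂ}
    (hp : p ≠ 0) {A : ℝ} (hA : 0 ≤ A) :
    ∃ C > 0, ∀ g : (Fin n → ℂ) → ℂ, Differentiable ℂ g → ∀ M : ℝ,
      (∀ z, ‖eval z p * g z‖ ≤ M * Real.exp (A * enorm' z)) →
      ∀ z, ‖g z‖ ≤ C * M * Real.exp (A * enorm' z) := by
  obtain ⟨w, K, hK, hcircle⟩ := exists_forall_exists_radius_le_norm_eval_add_smul hp
  refine ⟨Real.exp (2 * A * enorm' w) / K, by positivity, fun g hg M hM z => ?_⟩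
  obtain ⟨r, ⟨hr1, hr2⟩, hr⟩ := hcircle z
  have hM0 : 0 ≤ M := nonneg_of_mul_nonneg_left ((norm_nonneg _).trans (hM 0)) (Real.exp_pos _)
  have hgline : Differentiable ℂ fun t : ℂ => g (z + t • w) :=
    hg.comp ((differentiable_const z).add (differentiable_id.smul_const w))
  suffices ∀ t : ℂ, ‖t‖ = r →
      ‖g (z + t • w)‖ ≤ Real.exp (2 * A * enorm' w) / K * M * Real.exp (A * enorm' z) by
    simpa using hgline.norm_le_of_forall_norm_sub_eq_le (c := 0) (r := r) (by linarith)
      fun t ht => this t (by simpa using ht)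
  intro t ht
  have hgrowth : A * enorm' (z + t • w) ≤ A * enorm' z + 2 * A * enorm' w :=
    calc A * enorm' (z + t • w) ≤ A * (enorm' z + ‖t‖ * enorm' w) := by
          gcongr; exact enorm'_add_smul_le z w t
      _ ≤ A * (enorm' z + 2 * enorm' w) := by
          gcongr
          · exact enorm'_nonneg w
          · exact ht ▸ hr2
      _ = A * enorm' z + 2 * A * enorm' w := by ring
  have hbound : K * ‖g (z + t • w)‖ ≤
      M * Real.exp (A * enorm' z) * Real.exp (2 * A * enorm' w) :=
    calc K * ‖g (z + t • w)‖ ≤ ‖eval (z + t • w) p‖ * ‖g (z + t • w)‖ := by gcongr; exact hr t ht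
      _ ≤ M * Real.exp (A * enorm' (z + t • w)) := (norm_mul _ _).symm.trans_le (hM _)
      _ ≤ M * Real.exp (A * enorm' z + 2 * A * enorm' w) := by gcongr
      _ = M * Real.exp (A * enorm' z) * Real.exp (2 * A * enorm' w) := by
          rw [Real.exp_add, ← mul_assoc]
  rw [div_mul_eq_mul_div, div_mul_eq_mul_div, le_div_iff₀ hK]
  linarith

theorem stmt_6 {n : ℕ} (p : MvPolynomial (Fin n) ℂ) (hp : p ≠ 0) (A : ℝ) (hA : 0 < A)
    (f : ℕ → (Fin n → ℂ) → ℂ) (hf : ∀ m, Differentiable ℂ (f m))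
    (hc : ∀ ε > (0:ℝ), ∃ N, ∀ m ≥ N, ∀ k ≥ N, ∀ z,
      ‖MvPolynomial.eval z p * f m z - MvPolynomial.eval z p * f k z‖ ≤
        ε * Real.exp (A * enorm' z)) :
    ∀ ε > (0:ℝ), ∃ N, ∀ m ≥ N, ∀ k ≥ N, ∀ z,
      ‖f m z - f k z‖ ≤ ε * Real.exp (Real.sqrt n * A * enorm' z) := by
  obtain ⟨C, hC, hdiv⟩ := exists_forall_norm_le_of_norm_eval_mul_le hp hA.le
  intro ε hε
  obtain ⟨N, hN⟩ := hc (ε / C) (by positivity)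
  refine ⟨N, fun m hm k hk z => ?_⟩
  have hdiff := hdiv (f m - f k) ((hf m).sub (hf k)) (ε / C)
    (fun z => by simpa only [Pi.sub_apply, mul_sub] using hN m hm k hk z) z
  rw [mul_div_cancel₀ ε hC.ne'] at hdiff
  calc ‖f m z - f k z‖ ≤ ε * Real.exp (A * enorm' z) := hdiff
    _ ≤ ε * Real.exp (Real.sqrt n * A * enorm' z) := by
        gcongr ε * Real.exp ?_
        rw [mul_comm _ A, mul_assoc]
        exact mul_le_mul_of_nonneg_left (enorm'_le_sqrt_mul z) hA.le
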